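/- arXiv:2204.13977 — 2 statements merged into one kernel-verified Lean document; each statement's English description precedes it below -/
import Mathlib

section
/- For m ≥ 3 and n ≥ 1, the number of Type I(b) tandem occurrences in the Fibonacci array f_{m,n}, i.e. the number of tuples (i,j,r,l) with r,l ≥ 1, i+2r ≤ F(m), j+l ≤ F(n) such that f_{m,n}[(i,j);(r,l)] = f_{m,n}[(i+r,j);(r,l)], equals R(m) · F(n)(F(n)+1)/2, where R(m) is the number of square occurrences in the 1D Fibonacci word f_m. -/
/-- Fibonacci numbers: F(0)=1, F(1)=1, F(n+2)=F(n+1)+F(n). -/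
def F : ℕ → ℕ
  | 0 => 1
  | 1 => 1
  | n + 2 => F (n + 1) + F n

/-- Finite Fibonacci words over {a,b} coded as Fin 2 (a=0, b=1). -/
def fibWord : ℕ → List (Fin 2)
  | 0 => [0]
  | 1 => [1]
  | n + 2 => fibWord (n + 1) ++ fibWord n

/-- The Fibonacci arrays f_{m,n} over {a,b,c,d} coded as Fin 2 × Fin 2,
with a=(0,0), b=(0,1), c=(1,0), d=(1,1); `fibArr m n i j` is the (i,j) entry
(0-indexed, only indices i < F m, j < F n are meaningful). -/
def fibArr : ℕ → ℕ → ℕ → ℕ → Fin 2 × Fin 2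
  | 0, 0, _, _ => (0, 0)
  | 0, 1, _, _ => (0, 1)
  | 1, 0, _, _ => (1, 0)
  | 1, 1, _, _ => (1, 1)
  | 0, n + 2, i, j =>
      if j < F (n + 1) then fibArr 0 (n + 1) i j else fibArr 0 n i (j - F (n + 1))
  | 1, n + 2, i, j =>
      if j < F (n + 1) then fibArr 1 (n + 1) i j else fibArr 1 n i (j - F (n + 1))
  | m + 2, k, i, j =>
      if i < F (m + 1) then fibArr (m + 1) k i j else fibArr m k (i - F (m + 1)) j
  termination_by m n => (m, n)

/-- The r × l subarray of u with top-left entry at (i,j). -/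
def subarr (u : ℕ → ℕ → Fin 2 × Fin 2) (i j r l : ℕ) : Fin r × Fin l → Fin 2 × Fin 2 :=
  fun p => u (i + p.1.val) (j + p.2.val)

/-- Number of square occurrences in a finite word. -/
noncomputable def sqOcc (w : List (Fin 2)) : ℕ :=
  {p : ℕ × ℕ | 1 ≤ p.2 ∧ p.1 + 2 * p.2 ≤ w.length ∧
    ∀ t < p.2, w.getD (p.1 + t) 0 = w.getD (p.1 + p.2 + t) 0}.ncard

/-- R(n): number of square occurrences in f_n. -/
noncomputable def R (n : ℕ) : ℕ := sqOcc (fibWord n)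

/-!
Both recursions defining `f_{m,n}` act on one coordinate only, so the entry of `f_{m,n}` at
`(i, j)` is the pair `(f_m[i], f_n[j])` of letters of the Fibonacci words. Two vertically
adjacent `r × l` blocks of such a product array agree exactly when the corresponding length-`r`
factors of `f_m` agree, whatever the columns. Hence the Type I(b) tandems are the products of a
square occurrence `(i, r)` in `f_m` with an arbitrary column window `(j, l)`, of which there are
`F(n)(F(n)+1)/2`.
-/

/-- `fibWord m` read as a total function; it has no length bound, so it is also meaningful
outside `[0, F m)`, which lets `fibArr` factor through it without side conditions. -/
def fibLetter : ℕ → ℕ → Fin 2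
  | 0, _ => 0
  | 1, _ => 1
  | m + 2, i => if i < F (m + 1) then fibLetter (m + 1) i else fibLetter m (i - F (m + 1))

theorem fibArr_eq (m n : ℕ) : fibArr m n = fun i j => (fibLetter m i, fibLetter n j) := by
  funext i j
  induction m, n, i, j using fibArr.induct <;> (rw [fibArr]; simp [fibLetter, *])

theorem length_fibWord (n : ℕ) : (fibWord n).length = F n := by
  induction n using fibWord.induct <;> simp [fibWord, F, *]

theorem fibLetter_eq_getD {m i : ℕ} (h : i < F m) : fibLetter m i = (fibWord m).getD i 0 := by
  induction m using fibWord.induct generalizing i with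
  | case1 | case2 => rw [F] at h; interval_cases i; rfl
  | case3 n ih₁ ih₂ =>
    rw [fibLetter, fibWord]
    split_ifs with hi
    · rw [List.getD_append _ _ _ _ (by rwa [length_fibWord]), ih₁ hi]
    · rw [F] at h
      rw [List.getD_append_right _ _ _ _ (by rw [length_fibWord]; omega), length_fibWord,
        ih₂ (by omega)]

theorem R_eq_ncard_fibLetter (m : ℕ) :
    R m = {p : ℕ × ℕ | 1 ≤ p.2 ∧ p.1 + 2 * p.2 ≤ F m ∧
      ∀ t < p.2, fibLetter m (p.1 + t) = fibLetter m (p.1 + p.2 + t)}.ncard := by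
  unfold R sqOcc
  congr 1
  ext ⟨i, r⟩
  simp only [Set.mem_ofPred_eq, length_fibWord]
  refine and_congr_right fun _ => and_congr_right fun hi => forall₂_congr fun t ht => ?_
  rw [fibLetter_eq_getD (by omega), fibLetter_eq_getD (by omega)]

theorem subarr_prod_eq_shift_iff (a b : ℕ → Fin 2) {i j r l : ℕ} (hl : 1 ≤ l) :
    subarr (fun x y => (a x, b y)) i j r l = subarr (fun x y => (a x, b y)) (i + r) j r l ↔
      ∀ t < r, a (i + t) = a (i + r + t) := by
  simp only [subarr, funext_iff, Prod.forall, Fin.forall_iff, Prod.mk.injEq, and_true]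
  exact ⟨fun h t ht => h t ht 0 hl, fun h t ht _ _ => h t ht⟩

open Finset in
theorem ncard_pos_snd_add_le (N : ℕ) :
    {p : ℕ × ℕ | 1 ≤ p.2 ∧ p.1 + p.2 ≤ N}.ncard = N * (N + 1) / 2 := by
  calc {p : ℕ × ℕ | 1 ≤ p.2 ∧ p.1 + p.2 ≤ N}.ncard
      = #((range N ×ˢ range (N + 1)).filter (fun p => 1 ≤ p.2 ∧ p.1 + p.2 ≤ N)) := by
        rw [← Set.ncard_coe_finset]
        congr 1
        ext p
        simp only [Set.mem_ofPred_eq, coe_filter, mem_product, mem_range]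
        omega
    _ = ∑ j ∈ range N, (N - j) := by
        rw [card_filter, sum_product]
        refine sum_congr rfl fun j _ => ?_
        rw [← card_filter, ← Nat.sub_zero (N - j), ← Nat.card_Ioc]
        congr 1
        ext l
        simp only [mem_filter, mem_range, mem_Ioc]
        omega
    _ = ∑ j ∈ range (N + 1), j := by
        rw [sum_range_succ', ← sum_range_reflect]
        refine sum_congr rfl fun j hj => ?_
        rw [mem_range] at hj
        omega
    _ = N * (N + 1) / 2 := by rw [sum_range_id, Nat.add_sub_cancel, Nat.mul_comm]

theorem ncard_setOf_mem_and_mem {α β γ δ : Type*} (A : Set (α × γ)) (B : Set (β × δ)) :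
    {t : α × β × γ × δ | (t.1, t.2.2.1) ∈ A ∧ (t.2.1, t.2.2.2) ∈ B}.ncard
      = A.ncard * B.ncard := by
  have hinj : Function.Injective
      fun q : (α × γ) × (β × δ) => (q.1.1, q.2.1, q.1.2, q.2.2) := by
    rintro ⟨⟨_, _⟩, _, _⟩ ⟨⟨_, _⟩, _, _⟩ h
    simp_all
  rw [← Set.ncard_prod, ← Set.ncard_image_of_injective _ hinj]
  congr 1
  ext ⟨a, b, c, d⟩
  simp

theorem stmt3_general (m n : ℕ) :
    {t : ℕ × ℕ × ℕ × ℕ | 1 ≤ t.2.2.1 ∧ 1 ≤ t.2.2.2 ∧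
      t.1 + 2 * t.2.2.1 ≤ F m ∧ t.2.1 + t.2.2.2 ≤ F n ∧
      subarr (fibArr m n) t.1 t.2.1 t.2.2.1 t.2.2.2
        = subarr (fibArr m n) (t.1 + t.2.2.1) t.2.1 t.2.2.1 t.2.2.2}.ncard
      = R m * (F n * (F n + 1) / 2) := by
  rw [R_eq_ncard_fibLetter, ← ncard_pos_snd_add_le, ← ncard_setOf_mem_and_mem]
  congr 1
  ext ⟨i, j, r, l⟩
  simp only [Set.mem_ofPred_eq, fibArr_eq]
  constructor
  · rintro ⟨hr, hl, hi, hj, h⟩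
    exact ⟨⟨hr, hi, (subarr_prod_eq_shift_iff _ _ hl).1 h⟩, hl, hj⟩
  · rintro ⟨⟨hr, hi, h⟩, hl, hj⟩
    exact ⟨hr, hl, hi, hj, (subarr_prod_eq_shift_iff _ _ hl).2 h⟩

/-- For m ≥ 3 and n ≥ 1, the number of Type I(b) tandem occurrences in the
Fibonacci array f_{m,n} — tuples (i,j,r,l) with r,l ≥ 1, i+2r ≤ F(m), j+l ≤ F(n) such that
f_{m,n}[(i,j);(r,l)] = f_{m,n}[(i+r,j);(r,l)] — equals R(m)·F(n)(F(n)+1)/2. -/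
theorem stmt3 (m n : ℕ) (hm : 3 ≤ m) (hn : 1 ≤ n) :
    {t : ℕ × ℕ × ℕ × ℕ | 1 ≤ t.2.2.1 ∧ 1 ≤ t.2.2.2 ∧
      t.1 + 2 * t.2.2.1 ≤ F m ∧ t.2.1 + t.2.2.2 ≤ F n ∧
      subarr (fibArr m n) t.1 t.2.1 t.2.2.1 t.2.2.2
        = subarr (fibArr m n) (t.1 + t.2.2.1) t.2.1 t.2.2.1 t.2.2.2}.ncard
      = R m * (F n * (F n + 1) / 2) :=
  stmt3_general m n
end

section
/- For m,n ≥ 3, the number of Type II(b) tandem occurrences in the Fibonacci array f_{m,n}, i.e. the number of tuples (i,j,r,l) with r,l ≥ 1, i+2r ≤ F(m), j+2l ≤ F(n) such that f_{m,n}[(i,j+l);(r,l)] = f_{m,n}[(i+r,j);(r,l)], equals R(m)·R(n), where R(k) is the number of square occurrences in the 1D Fibonacci word f_k. -/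
/-!
The Fibonacci array is the "tensor product" of two Fibonacci words: the column recursion acts only
on the second letter and the row recursion only on the first, so the entry of `f_{m,n}` at `(i, j)`
is the pair `(f_m[i], f_n[j])`. Consequently `f_{m,n}[(i,j+l);(r,l)] = f_{m,n}[(i+r,j);(r,l)]`
holds exactly when `(i, r)` is a square occurrence in `f_m` and `(j, l)` one in `f_n`, and the
Type II(b) tandem occurrences are in bijection with pairs of square occurrences.
-/

theorem fibWord_length : ∀ n, (fibWord n).length = F n
  | 0 | 1 => rfl
  | n + 2 => by simp [fibWord, F, fibWord_length (n + 1), fibWord_length n]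

theorem fibWord_getD_add_two (n i : ℕ) :
    (fibWord (n + 2)).getD i 0 =
      if i < F (n + 1) then (fibWord (n + 1)).getD i 0
      else (fibWord n).getD (i - F (n + 1)) 0 := by
  rw [fibWord]
  split_ifs with h
  · exact List.getD_append _ _ _ _ (by rwa [fibWord_length])
  · rw [List.getD_append_right _ _ _ _ (by rw [fibWord_length]; omega), fibWord_length]

theorem fibArr_eq_getD (m n i j : ℕ) (hi : i < F m) (hj : j < F n) :
    fibArr m n i j = ((fibWord m).getD i 0, (fibWord n).getD j 0) := by
  fun_induction fibArr m n i j with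
  | case1 | case2 | case3 | case4 => simp_all [F, fibWord]
  | case5 _ _ _ h ih | case7 _ _ _ h ih =>
    rw [fibWord_getD_add_two, if_pos h]; exact ih hi h
  | case6 _ _ _ h ih | case8 _ _ _ h ih =>
    rw [fibWord_getD_add_two, if_neg h]; exact ih hi (by rw [F] at hj; omega)
  | case9 _ _ _ _ h ih => rw [fibWord_getD_add_two, if_pos h]; exact ih h hj
  | case10 _ _ _ _ h ih =>
    rw [fibWord_getD_add_two, if_neg h]; exact ih (by rw [F] at hi; omega) hj

def squareOccs (w : List (Fin 2)) : Set (ℕ × ℕ) :=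
  {p | 1 ≤ p.2 ∧ p.1 + 2 * p.2 ≤ w.length ∧
    ∀ t < p.2, w.getD (p.1 + t) 0 = w.getD (p.1 + p.2 + t) 0}

def typeIIbOccs (u : ℕ → ℕ → Fin 2 × Fin 2) (M N : ℕ) : Set (ℕ × ℕ × ℕ × ℕ) :=
  {t | 1 ≤ t.2.2.1 ∧ 1 ≤ t.2.2.2 ∧ t.1 + 2 * t.2.2.1 ≤ M ∧ t.2.1 + 2 * t.2.2.2 ≤ N ∧
    subarr u t.1 (t.2.1 + t.2.2.2) t.2.2.1 t.2.2.2 = subarr u (t.1 + t.2.2.1) t.2.1 t.2.2.1 t.2.2.2}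

theorem subarr_eq_subarr_iff_of_eq_pair {u : ℕ → ℕ → Fin 2 × Fin 2} {x y : ℕ → Fin 2}
    {M N i j r l : ℕ} (hu : ∀ a < M, ∀ b < N, u a b = (x a, y b))
    (hr : 0 < r) (hl : 0 < l) (hi : i + 2 * r ≤ M) (hj : j + 2 * l ≤ N) :
    subarr u i (j + l) r l = subarr u (i + r) j r l ↔
      (∀ t < r, x (i + t) = x (i + r + t)) ∧ (∀ t < l, y (j + t) = y (j + l + t)) := by
  have hentry : ∀ a < r, ∀ b < l, (u (i + a) (j + l + b) = u (i + r + a) (j + b) ↔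
      x (i + a) = x (i + r + a) ∧ y (j + b) = y (j + l + b)) := fun a ha b hb => by
    rw [hu _ (by omega) _ (by omega), hu _ (by omega) _ (by omega), Prod.ext_iff,
      eq_comm (a := y _)]
  simp only [funext_iff, subarr, Prod.forall, Fin.forall_iff]
  constructor
  · intro h
    exact ⟨fun a ha => ((hentry a ha 0 hl).1 (h a ha 0 hl)).1,
      fun b hb => ((hentry 0 hr b hb).1 (h 0 hr b hb)).2⟩
  · rintro ⟨hx, hy⟩ a ha b hb
    exact (hentry a ha b hb).2 ⟨hx a ha, hy b hb⟩

theorem ncard_typeIIbOccs_of_eq_pair {u : ℕ → ℕ → Fin 2 × Fin 2} {v w : List (Fin 2)}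
    (hu : ∀ i < v.length, ∀ j < w.length, u i j = (v.getD i 0, w.getD j 0)) :
    (typeIIbOccs u v.length w.length).ncard = sqOcc v * sqOcc w := by
  let e := (Equiv.prodProdProdComm ℕ ℕ ℕ ℕ).trans (Equiv.prodAssoc ℕ ℕ (ℕ × ℕ))
  have hset : typeIIbOccs u v.length w.length = e '' (squareOccs v ×ˢ squareOccs w) := by
    ext ⟨i, j, r, l⟩
    rw [Set.mem_image_equiv]
    change _ ↔ ((i, r), (j, l)) ∈ squareOccs v ×ˢ squareOccs w
    constructor
    · rintro ⟨hr, hl, hi, hj, hsub⟩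
      rw [subarr_eq_subarr_iff_of_eq_pair hu hr hl hi hj] at hsub
      exact ⟨⟨hr, hi, hsub.1⟩, hl, hj, hsub.2⟩
    · rintro ⟨⟨hr, hi, hx⟩, hl, hj, hy⟩
      exact ⟨hr, hl, hi, hj, (subarr_eq_subarr_iff_of_eq_pair hu hr hl hi hj).2 ⟨hx, hy⟩⟩
  rw [hset, Set.ncard_image_of_injective _ e.injective, Set.ncard_prod]
  rfl

theorem stmt6_general (m n : ℕ) :
    {t : ℕ × ℕ × ℕ × ℕ | 1 ≤ t.2.2.1 ∧ 1 ≤ t.2.2.2 ∧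
      t.1 + 2 * t.2.2.1 ≤ F m ∧ t.2.1 + 2 * t.2.2.2 ≤ F n ∧
      subarr (fibArr m n) t.1 (t.2.1 + t.2.2.2) t.2.2.1 t.2.2.2
        = subarr (fibArr m n) (t.1 + t.2.2.1) t.2.1 t.2.2.1 t.2.2.2}.ncard
      = R m * R n := by
  have hentry : ∀ i < (fibWord m).length, ∀ j < (fibWord n).length,
      fibArr m n i j = ((fibWord m).getD i 0, (fibWord n).getD j 0) := by
    simpa only [fibWord_length] using fun i hi j hj => fibArr_eq_getD m n i j hi hj
  have hcount := ncard_typeIIbOccs_of_eq_pair hentry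
  rw [fibWord_length, fibWord_length] at hcount
  exact hcount

/-- For m,n ≥ 3, the number of Type II(b) tandem occurrences in f_{m,n}
— tuples (i,j,r,l) with r,l ≥ 1, i+2r ≤ F(m), j+2l ≤ F(n) such that
f_{m,n}[(i,j+l);(r,l)] = f_{m,n}[(i+r,j);(r,l)] — equals R(m)·R(n). -/
theorem stmt6 (m n : ℕ) (hm : 3 ≤ m) (hn : 3 ≤ n) :
    {t : ℕ × ℕ × ℕ × ℕ | 1 ≤ t.2.2.1 ∧ 1 ≤ t.2.2.2 ∧
      t.1 + 2 * t.2.2.1 ≤ F m ∧ t.2.1 + 2 * t.2.2.2 ≤ F n ∧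
      subarr (fibArr m n) t.1 (t.2.1 + t.2.2.2) t.2.2.1 t.2.2.2
        = subarr (fibArr m n) (t.1 + t.2.2.1) t.2.1 t.2.2.1 t.2.2.2}.ncard
      = R m * R n :=
  stmt6_general m n
end
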